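/- Let d ≥ 1 and let u : ℝ × ℝ → ℝ^d be a smooth (C^∞) solution of the vmKdV equation u_t + (3/2)‖u‖² u_x + u_xxx = 0 that is 1-periodic in x, i.e. u(x+1,t) = u(x,t) for all x,t. Then the energy functional F₄(u)(t) = ∫₀¹ (1/2)‖u_x(x,t)‖² − (1/8)‖u(x,t)‖⁴ dx is constant in t; equivalently, its time derivative vanishes for every t. -/

import Mathlib

open Real MeasureTheory intervalIntegral InnerProductSpace ContDiff

/-- Partial derivative in the first (space) variable. -/
noncomputable def pdx {E : Type*} [NormedAddCommGroup E] [NormedSpace ℝ E]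
    (u : ℝ → ℝ → E) : ℝ → ℝ → E := fun x t => deriv (fun y => u y t) x

/-- Partial derivative in the second (time) variable. -/
noncomputable def pdt {E : Type*} [NormedAddCommGroup E] [NormedSpace ℝ E]
    (u : ℝ → ℝ → E) : ℝ → ℝ → E := fun x t => deriv (fun s => u x s) t

/-- The vectorial modified KdV equation `u_t + (3/2)‖u‖² u_x + u_xxx = 0`. -/
def IsVmKdV {d : ℕ} (u : ℝ → ℝ → EuclideanSpace ℝ (Fin d)) : Prop :=
  ∀ x t : ℝ,
    pdt u x t + ((3 : ℝ) / 2 * ‖u x t‖ ^ 2) • pdx u x t + pdx (pdx (pdx u)) x t = 0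

/-!
Along a solution the energy density `e = ½‖u_x‖² - ⅛‖u‖⁴` satisfies a local conservation law
`∂ₜ e = ∂ₓ G`: after commuting `∂ₜ∂ₓ = ∂ₓ∂ₜ` and substituting `u_t = -(3/2)‖u‖² u_x - u_xxx`,
`∂ₜ e` becomes the exact `x`-derivative of an explicit polynomial `G` in the inner products of
`u, …, u_xxx`. Since `G` is 1-periodic in `x`, `∫₀¹ ∂ₜ e dx = G(1) - G(0) = 0`, and
differentiating under the integral sign (legitimate as all the integrands are jointly
continuous) gives `dF₄/dt = 0`.
-/

open scoped RealInnerProductSpace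
open Function

theorem Function.Periodic.deriv {E : Type*} [NormedAddCommGroup E] [NormedSpace ℝ E]
    {f : ℝ → E} {c : ℝ} (hf : Periodic f c) : Periodic (deriv f) c := fun x => by
  rw [← deriv_comp_add_const, hf.funext]

theorem Function.Periodic.intervalIntegral_eq_zero_of_hasDerivAt {E : Type*}
    [NormedAddCommGroup E] [NormedSpace ℝ E] [CompleteSpace E] {f f' : ℝ → E} {a c : ℝ}
    (hf : Periodic f c) (hderiv : ∀ x, HasDerivAt f (f' x) x)
    (hint : IntervalIntegrable f' volume a (a + c)) :
    ∫ x in a..a + c, f' x = 0 := by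
  rw [integral_eq_sub_of_hasDerivAt (fun x _ => hderiv x) hint, hf a, sub_self]

theorem hasDerivAt_intervalIntegral_of_continuous {E : Type*} [NormedAddCommGroup E]
    [NormedSpace ℝ E] [CompleteSpace E] {F F' : ℝ → ℝ → E} {a b t : ℝ}
    (hF : Continuous (uncurry F)) (hF' : Continuous (uncurry F'))
    (hderiv : ∀ x s, HasDerivAt (fun s => F x s) (F' x s) s) :
    HasDerivAt (fun s => ∫ x in a..b, F x s) (∫ x in a..b, F' x t) t := by
  obtain ⟨C, hC⟩ := (isCompact_uIcc.prod (isCompact_closedBall t 1)).exists_bound_of_continuousOn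
    hF'.continuousOn
  refine (hasDerivAt_integral_of_dominated_loc_of_deriv_le (bound := fun _ => C)
    (Metric.closedBall_mem_nhds t one_pos)
    (.of_forall fun s => (hF.uncurry_right s).aestronglyMeasurable)
    ((hF.uncurry_right t).intervalIntegrable _ _)
    (hF'.uncurry_right t).aestronglyMeasurable ?_ intervalIntegrable_const
    (.of_forall fun x _ s _ => hderiv x s)).2
  exact .of_forall fun x hx s hs => hC (x, s) ⟨Set.uIoc_subset_uIcc hx, hs⟩

section PartialDerivatives

variable {E : Type*} [NormedAddCommGroup E] [NormedSpace ℝ E] {w : ℝ → ℝ → E} {x t : ℝ}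

theorem hasDerivAt_pdx (hw : DifferentiableAt ℝ (uncurry w) (x, t)) :
    HasDerivAt (fun y => w y t) (pdx w x t) x :=
  DifferentiableAt.hasDerivAt (f := fun y => w y t)
    (hw.comp (f := fun y => (y, t)) x (differentiableAt_id.prodMk (differentiableAt_const t)))

theorem hasDerivAt_pdt (hw : DifferentiableAt ℝ (uncurry w) (x, t)) :
    HasDerivAt (fun s => w x s) (pdt w x t) t :=
  DifferentiableAt.hasDerivAt (f := fun s => w x s)
    (hw.comp (f := fun s => (x, s)) t ((differentiableAt_const x).prodMk differentiableAt_id))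

theorem pdx_eq_fderiv (hw : DifferentiableAt ℝ (uncurry w) (x, t)) :
    pdx w x t = fderiv ℝ (uncurry w) (x, t) (1, 0) := by
  have h := hw.hasFDerivAt.comp x ((hasFDerivAt_id (𝕜 := ℝ) x).prodMk (hasFDerivAt_const t x))
  simpa [pdx, comp_def] using h.hasDerivAt.deriv

theorem pdt_eq_fderiv (hw : DifferentiableAt ℝ (uncurry w) (x, t)) :
    pdt w x t = fderiv ℝ (uncurry w) (x, t) (0, 1) := by
  have h := hw.hasFDerivAt.comp t ((hasFDerivAt_const x t).prodMk (hasFDerivAt_id t))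
  simpa [pdt, comp_def] using h.hasDerivAt.deriv

theorem uncurry_pdx_eq_fderiv (hw : Differentiable ℝ (uncurry w)) :
    uncurry (pdx w) = fun p => fderiv ℝ (uncurry w) p (1, 0) :=
  funext fun p => pdx_eq_fderiv (hw p)

theorem uncurry_pdt_eq_fderiv (hw : Differentiable ℝ (uncurry w)) :
    uncurry (pdt w) = fun p => fderiv ℝ (uncurry w) p (0, 1) :=
  funext fun p => pdt_eq_fderiv (hw p)

theorem ContDiff.uncurry_pdx (hw : ContDiff ℝ ∞ (uncurry w)) :
    ContDiff ℝ ∞ (uncurry (pdx w)) := by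
  rw [uncurry_pdx_eq_fderiv (hw.differentiable (by simp))]
  exact (hw.fderiv_right (by simp)).clm_apply contDiff_const

theorem ContDiff.uncurry_pdt (hw : ContDiff ℝ ∞ (uncurry w)) :
    ContDiff ℝ ∞ (uncurry (pdt w)) := by
  rw [uncurry_pdt_eq_fderiv (hw.differentiable (by simp))]
  exact (hw.fderiv_right (by simp)).clm_apply contDiff_const

theorem pdt_pdx_comm (hw : ContDiff ℝ ∞ (uncurry w)) (x t : ℝ) :
    pdt (pdx w) x t = pdx (pdt w) x t := by
  have hf' : Differentiable ℝ (fderiv ℝ (uncurry w)) :=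
    (hw.fderiv_right (m := ∞) (by simp)).differentiable (by simp)
  have hderiv (e : ℝ × ℝ) : fderiv ℝ (fun q => fderiv ℝ (uncurry w) q e) (x, t)
      = (fderiv ℝ (fderiv ℝ (uncurry w)) (x, t)).flip e := by
    rw [fderiv_clm_apply (hf' _) (differentiableAt_const e)]
    simp
  rw [pdt_eq_fderiv (hw.uncurry_pdx.differentiable (by simp) _),
    pdx_eq_fderiv (hw.uncurry_pdt.differentiable (by simp) _),
    uncurry_pdx_eq_fderiv (hw.differentiable (by simp)),
    uncurry_pdt_eq_fderiv (hw.differentiable (by simp)), hderiv, hderiv]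
  exact (hw.contDiffAt.isSymmSndFDerivAt (by simp; exact WithTop.coe_le_coe.2 le_top) _ _).symm

theorem periodic_pdx {c : ℝ} (hw : ∀ t, Periodic (fun x => w x t) c) (t : ℝ) :
    Periodic (fun x => pdx w x t) c :=
  (hw t).deriv

end PartialDerivatives

section Energy

variable {F : Type*} [NormedAddCommGroup F] [InnerProductSpace ℝ F] {u : ℝ → ℝ → F}

noncomputable def vmkdvEnergyDensity (u : ℝ → ℝ → F) (x t : ℝ) : ℝ :=
  1 / 2 * ‖pdx u x t‖ ^ 2 - 1 / 8 * ‖u x t‖ ^ 4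

noncomputable def vmkdvEnergyRate (u : ℝ → ℝ → F) (x t : ℝ) : ℝ :=
  ⟪pdx u x t, pdt (pdx u) x t⟫ - 1 / 2 * ‖u x t‖ ^ 2 * ⟪u x t, pdt u x t⟫

noncomputable def vmkdvEnergyFlux (u : ℝ → ℝ → F) (x t : ℝ) : ℝ :=
  1 / 8 * ‖u x t‖ ^ 6 + 1 / 2 * ‖u x t‖ ^ 2 * ⟪u x t, pdx (pdx u) x t⟫
    - ‖u x t‖ ^ 2 * ‖pdx u x t‖ ^ 2 - 1 / 2 * ⟪u x t, pdx u x t⟫ ^ 2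
    - ⟪pdx u x t, pdx (pdx (pdx u)) x t⟫ + 1 / 2 * ‖pdx (pdx u) x t‖ ^ 2

theorem hasDerivAt_vmkdvEnergyDensity {x t : ℝ}
    (hu : DifferentiableAt ℝ (uncurry u) (x, t))
    (hux : DifferentiableAt ℝ (uncurry (pdx u)) (x, t)) :
    HasDerivAt (fun s => vmkdvEnergyDensity u x s) (vmkdvEnergyRate u x t) t := by
  have h := ((hasDerivAt_pdt hux).norm_sq.const_mul (1 / 2)).sub
    (((hasDerivAt_pdt hu).norm_sq.pow 2).const_mul (1 / 8))
  refine (h.congr_deriv ?_).congr_of_eventuallyEq (.of_forall fun s => ?_)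
  · simp only [vmkdvEnergyRate]
    ring
  · simp only [vmkdvEnergyDensity, Pi.sub_apply, Pi.pow_apply]
    ring

theorem continuous_vmkdvEnergyDensity (hu : Continuous (uncurry u))
    (hux : Continuous (uncurry (pdx u))) : Continuous (uncurry (vmkdvEnergyDensity u)) :=
  (continuous_const.mul (hux.norm.pow 2)).sub (continuous_const.mul (hu.norm.pow 4))

theorem continuous_vmkdvEnergyRate (hu : Continuous (uncurry u))
    (hux : Continuous (uncurry (pdx u))) (hut : Continuous (uncurry (pdt u)))
    (huxt : Continuous (uncurry (pdt (pdx u)))) : Continuous (uncurry (vmkdvEnergyRate u)) :=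
  (hux.inner huxt).sub ((continuous_const.mul (hu.norm.pow 2)).mul (hu.inner hut))

theorem periodic_vmkdvEnergyFlux {c : ℝ} (hper : ∀ t, Periodic (fun x => u x t) c) (t : ℝ) :
    Periodic (fun x => vmkdvEnergyFlux u x t) c := fun x => by
  have hux := periodic_pdx hper
  have huxx := periodic_pdx hux
  simp only [vmkdvEnergyFlux, hper t x, hux t x, huxx t x, periodic_pdx huxx t x]

end Energy

section Solution

variable {d : ℕ} {u : ℝ → ℝ → EuclideanSpace ℝ (Fin d)}

theorem IsVmKdV.pdt_eq (hsol : IsVmKdV u) (x t : ℝ) :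
    pdt u x t = -((3 / 2 * ‖u x t‖ ^ 2) • pdx u x t) - pdx (pdx (pdx u)) x t := by
  rw [← sub_eq_zero, ← hsol x t]
  abel

theorem IsVmKdV.pdt_pdx_eq (hsol : IsVmKdV u) (hu : ContDiff ℝ ∞ (uncurry u)) (x t : ℝ) :
    pdt (pdx u) x t = -((3 / 2 * ‖u x t‖ ^ 2) • pdx (pdx u) x t
      + (3 * ⟪u x t, pdx u x t⟫) • pdx u x t) - pdx (pdx (pdx (pdx u))) x t := by
  have hux := hu.uncurry_pdx
  have huxxx := hux.uncurry_pdx.uncurry_pdx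
  rw [pdt_pdx_comm hu, pdx, funext fun y => hsol.pdt_eq y t]
  have h0 := hasDerivAt_pdx (hu.differentiable (by simp) (x, t))
  have h1 := hasDerivAt_pdx (hux.differentiable (by simp) (x, t))
  have h3 := hasDerivAt_pdx (huxxx.differentiable (by simp) (x, t))
  refine (((h0.norm_sq.const_mul (3 / 2)).smul h1).neg.sub h3).deriv.trans ?_
  module

theorem IsVmKdV.hasDerivAt_vmkdvEnergyFlux (hsol : IsVmKdV u) (hu : ContDiff ℝ ∞ (uncurry u))
    (x t : ℝ) :
    HasDerivAt (fun y => vmkdvEnergyFlux u y t) (vmkdvEnergyRate u x t) x := by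
  have hux := hu.uncurry_pdx
  have huxx := hux.uncurry_pdx
  have huxxx := huxx.uncurry_pdx
  have h0 := hasDerivAt_pdx (hu.differentiable (by simp) (x, t))
  have h1 := hasDerivAt_pdx (hux.differentiable (by simp) (x, t))
  have h2 := hasDerivAt_pdx (huxx.differentiable (by simp) (x, t))
  have h3 := hasDerivAt_pdx (huxxx.differentiable (by simp) (x, t))
  have hG := (((((h0.norm_sq.pow 3).const_mul (1 / 8)).add
    ((h0.norm_sq.const_mul (1 / 2)).mul (h0.inner ℝ h2))).sub (h0.norm_sq.mul h1.norm_sq)).sub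
    ((h0.inner ℝ h1).pow 2 |>.const_mul (1 / 2))).sub (h1.inner ℝ h3) |>.add
    (h2.norm_sq.const_mul (1 / 2))
  refine (hG.congr_deriv ?_).congr_of_eventuallyEq (.of_forall fun y => ?_)
  · simp only [vmkdvEnergyRate, hsol.pdt_pdx_eq hu, hsol.pdt_eq]
    simp only [inner_sub_right, inner_add_right, inner_neg_right, real_inner_smul_right,
      real_inner_self_eq_norm_sq]
    rw [real_inner_comm (pdx u x t) (u x t), real_inner_comm (pdx (pdx u) x t) (pdx u x t),
      real_inner_comm (pdx (pdx (pdx u)) x t) (pdx (pdx u) x t)]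
    ring
  · simp only [vmkdvEnergyFlux, Pi.add_apply, Pi.sub_apply, Pi.mul_apply, Pi.pow_apply]
    ring

theorem IsVmKdV.integral_vmkdvEnergyRate_eq_zero (hsol : IsVmKdV u)
    (hu : ContDiff ℝ ∞ (uncurry u)) (hper : ∀ t, Periodic (fun x => u x t) 1) (t : ℝ) :
    ∫ x in (0 : ℝ)..1, vmkdvEnergyRate u x t = 0 := by
  have hcont : Continuous fun x => vmkdvEnergyRate u x t :=
    (continuous_vmkdvEnergyRate hu.continuous hu.uncurry_pdx.continuous
      hu.uncurry_pdt.continuous hu.uncurry_pdx.uncurry_pdt.continuous).uncurry_right t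
  have h := (periodic_vmkdvEnergyFlux hper t).intervalIntegral_eq_zero_of_hasDerivAt
    (a := 0) (hsol.hasDerivAt_vmkdvEnergyFlux hu · t) (hcont.intervalIntegrable _ _)
  rwa [zero_add] at h

theorem IsVmKdV.hasDerivAt_integral_vmkdvEnergyDensity (hsol : IsVmKdV u)
    (hu : ContDiff ℝ ∞ (uncurry u)) (hper : ∀ t, Periodic (fun x => u x t) 1) (t : ℝ) :
    HasDerivAt (fun s => ∫ x in (0 : ℝ)..1, vmkdvEnergyDensity u x s) 0 t := by
  have hux := hu.uncurry_pdx
  have h := hasDerivAt_intervalIntegral_of_continuous (a := 0) (b := 1) (t := t)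
    (continuous_vmkdvEnergyDensity hu.continuous hux.continuous)
    (continuous_vmkdvEnergyRate hu.continuous hux.continuous hu.uncurry_pdt.continuous
      hux.uncurry_pdt.continuous)
    fun x s => hasDerivAt_vmkdvEnergyDensity (hu.differentiable (by simp) _)
      (hux.differentiable (by simp) _)
  rwa [hsol.integral_vmkdvEnergyRate_eq_zero hu hper t] at h

end Solution

theorem vmkdv_energy_constant_general (d : ℕ)
    (u : ℝ → ℝ → EuclideanSpace ℝ (Fin d))
    (hu : ContDiff ℝ ∞ (Function.uncurry u))
    (hsol : IsVmKdV u)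
    (hper : ∀ x t : ℝ, u (x + 1) t = u x t) :
    (∀ s t : ℝ,
        (∫ x in (0:ℝ)..1, (1 : ℝ) / 2 * ‖pdx u x s‖ ^ 2 - (1 : ℝ) / 8 * ‖u x s‖ ^ 4)
          = ∫ x in (0:ℝ)..1, (1 : ℝ) / 2 * ‖pdx u x t‖ ^ 2 - (1 : ℝ) / 8 * ‖u x t‖ ^ 4)
      ∧ ∀ t : ℝ,
        deriv (fun s =>
          ∫ x in (0:ℝ)..1, (1 : ℝ) / 2 * ‖pdx u x s‖ ^ 2 - (1 : ℝ) / 8 * ‖u x s‖ ^ 4) t = 0 := by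
  have hE := hsol.hasDerivAt_integral_vmkdvEnergyDensity hu fun t x => hper x t
  exact ⟨fun s t => is_const_of_deriv_eq_zero (fun r => (hE r).differentiableAt)
    (fun r => (hE r).deriv) s t, fun t => (hE t).deriv⟩

theorem vmkdv_energy_constant (d : ℕ) (hd : 1 ≤ d)
    (u : ℝ → ℝ → EuclideanSpace ℝ (Fin d))
    (hu : ContDiff ℝ ∞ (Function.uncurry u))
    (hsol : IsVmKdV u)
    (hper : ∀ x t : ℝ, u (x + 1) t = u x t) :
    (∀ s t : ℝ,
        (∫ x in (0:ℝ)..1, (1 : ℝ) / 2 * ‖pdx u x s‖ ^ 2 - (1 : ℝ) / 8 * ‖u x s‖ ^ 4)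
          = ∫ x in (0:ℝ)..1, (1 : ℝ) / 2 * ‖pdx u x t‖ ^ 2 - (1 : ℝ) / 8 * ‖u x t‖ ^ 4)
      ∧ ∀ t : ℝ,
        deriv (fun s =>
          ∫ x in (0:ℝ)..1, (1 : ℝ) / 2 * ‖pdx u x s‖ ^ 2 - (1 : ℝ) / 8 * ‖u x s‖ ^ 4) t = 0 :=
  vmkdv_energy_constant_general d u hu hsol hper
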